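/- Let G ∈ 𝒢_n^m with strong-component vertex set S, fiber sizes n_s, within-S outdegrees d*(s) and S×S adjacency matrix A*, and let 0 ≤ α < 1. Let M' = α·diag((d*(s) + n_s − 1)_{s∈S}) + (1−α)·A* (this is the block on S of the A_α-matrix of the digraph G' obtained from G by replacing each hung tree by an out-star of the same size with centre s, whose spectral radius equals ρ_α(G')). Then ρ_α(G) ≤ ρ(M'). -/

import Mathlib

open Polynomial Matrix Finset

/-- The outdegree of a vertex `v` of the digraph with adjacency matrix `A`. -/
noncomputable def outdeg {V : Type*} [Fintype V] (A : Matrix V V ℝ) (v : V) : ℝ := ∑ w, A v w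

/-- The `A_α`-matrix `α·D⁺ + (1-α)·A` of a digraph with adjacency matrix `A`. -/
noncomputable def Aalpha {V : Type*} [Fintype V] [DecidableEq V] (α : ℝ) (A : Matrix V V ℝ) :
    Matrix V V ℝ :=
  α • Matrix.diagonal (outdeg A) + (1 - α) • A

/-- The spectral radius of a real square matrix: the maximum modulus of its complex
eigenvalues (roots of the characteristic polynomial over `ℂ`). -/
noncomputable def specRad {V : Type*} [Fintype V] [DecidableEq V] (M : Matrix V V ℝ) : ℝ :=
  sSup {x : ℝ | ∃ z : ℂ, (M.map ((↑) : ℝ → ℂ)).charpoly.IsRoot z ∧ ‖z‖ = x}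

/-- The `A_α` energy of a digraph: the sum of the squares of the eigenvalues of its
`A_α`-matrix, equivalently `trace (A_α(G)²)`. -/
noncomputable def Ealpha {V : Type*} [Fintype V] [DecidableEq V] (α : ℝ) (A : Matrix V V ℝ) : ℝ :=
  Matrix.trace (Aalpha α A * Aalpha α A)

/-- The outdegree of `s` within the vertex set `S` (the within-`S` outdegree `d*(s)`). -/
noncomputable def dStar {V : Type*} [Fintype V] (A : Matrix V V ℝ) (S : Finset V) (s : V) : ℝ :=
  ∑ v ∈ S, A s v

/-- The size `n_s` of the fiber `r⁻¹(s)`. -/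
def fibCard {V : Type*} [Fintype V] [DecidableEq V] (r : V → V) (s : V) : ℕ :=
  (Finset.univ.filter (fun v => r v = s)).card

/-- The underlying undirected graph of the induced subdigraph on the fiber `r⁻¹(s)`. -/
def fiberGraph {V : Type*} (A : Matrix V V ℝ) (r : V → V) (s : V) :
    SimpleGraph {v : V // r v = s} where
  Adj u w := u ≠ w ∧ (A u.1 w.1 = 1 ∨ A w.1 u.1 = 1)
  symm := ⟨fun _ _ h => ⟨h.1.symm, h.2.symm⟩⟩
  loopless := ⟨fun _ h => h.1 rfl⟩

/-- The principal submatrix of `A` with rows and columns indexed by `S`. -/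
def subm {V : Type*} (A : Matrix V V ℝ) (S : Finset V) :
    Matrix {v : V // v ∈ S} {v : V // v ∈ S} ℝ :=
  A.submatrix (fun x => x.1) (fun x => x.1)

/-- `c₂(G*) = trace(A*²)`, the number of closed walks of length 2 in the strong component. -/
noncomputable def c2star {V : Type*} [Fintype V] [DecidableEq V] (A : Matrix V V ℝ)
    (S : Finset V) : ℝ :=
  Matrix.trace (subm A S * subm A S)

/-- Membership in the class `𝒢_n^m`: `A` is the adjacency matrix of a digraph of order `n`
with a unique strong component on the vertex set `S` of order `m`, with a directed tree
(the fiber `r⁻¹(s)`) hung on each vertex `s ∈ S`. -/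
structure IsGnm {V : Type*} [Fintype V] [DecidableEq V] (A : Matrix V V ℝ) (S : Finset V)
    (r : V → V) (n m : ℕ) : Prop where
  zero_one : ∀ u v, A u v = 0 ∨ A u v = 1
  loopless : ∀ v, A v v = 0
  card_V : Fintype.card V = n
  card_S : S.card = m
  two_le_m : 2 ≤ m
  m_lt_n : m < n
  strong : ∀ u ∈ S, ∀ v ∈ S, Relation.ReflTransGen (fun a b => a ∈ S ∧ b ∈ S ∧ A a b = 1) u v
  r_mem : ∀ v, r v ∈ S
  r_fix : ∀ s ∈ S, r s = s
  arc_cases : ∀ u v, A u v = 1 → (u ∈ S ∧ v ∈ S) ∨ r u = r v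
  fiber_no_symm : ∀ u v, r u = r v → A u v = 1 → A v u = 0
  fiber_tree : ∀ s ∈ S, (fiberGraph A r s).IsTree

/-- Every hung tree is an in-tree with root at its vertex of `S`: inside each fiber the
root has outdegree `0` and every other vertex has outdegree `1`. -/
def InTrees {V : Type*} [Fintype V] [DecidableEq V] (A : Matrix V V ℝ) (S : Finset V)
    (r : V → V) : Prop :=
  (∀ v, v ∉ S → (∑ w ∈ Finset.univ.filter (fun w => r w = r v), A v w) = 1) ∧
  (∀ s ∈ S, (∑ w ∈ Finset.univ.filter (fun w => r w = s), A s w) = 0)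

/-- All hung trees are trivial except the one at `v`, which is an out-star with centre `v`. -/
def OutStarAt {V : Type*} [Fintype V] [DecidableEq V] (A : Matrix V V ℝ) (S : Finset V)
    (r : V → V) (v : V) : Prop :=
  (∀ s ∈ S, s ≠ v → fibCard r s = 1) ∧ (∀ u w, r u = v → A u w = 1 → u = v)

/-!
Every arc leaving or entering the strong component `S` lies in a single hung tree, and an oriented
tree has no directed cycle, so all cycles of `G` lie in `G*`. Ordering the vertices accordingly
makes `A_α(G)` block triangular, with one block `A_α(G)[S]` and `1 × 1` blocks `α d⁺(v)` for
`v ∉ S`. Both kinds of block are dominated by `M'`: entrywise `A_α(G)[S] ≤ M'` because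
`d⁺(s) ≤ d*(s) + n_s - 1`, and `α d⁺(v) ≤ α (n_{r v} - 1) ≤ M'_{r v, r v}`. Finally, Gelfand's
formula shows that the spectral radius is monotone on entrywise ordered nonnegative matrices.
-/

attribute [local instance] Matrix.linftyOpNormedRing Matrix.linftyOpNormedAlgebra

open scoped NNReal ENNReal
open Relation

theorem spectralRadius_le_of_forall_nnnorm_pow_le {A : Type*} [NormedRing A] [NormedAlgebra ℂ A]
    [CompleteSpace A] {a b : A} (h : ∀ k : ℕ, ‖a ^ k‖₊ ≤ ‖b ^ k‖₊) :
    spectralRadius ℂ a ≤ spectralRadius ℂ b :=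
  le_of_tendsto_of_tendsto' (spectrum.pow_nnnorm_pow_one_div_tendsto_nhds_spectralRadius a)
    (spectrum.pow_nnnorm_pow_one_div_tendsto_nhds_spectralRadius b) fun k =>
      ENNReal.rpow_le_rpow (ENNReal.coe_le_coe.mpr (h k)) (by positivity)

section SpectralRadius

variable {ι : Type*} [Fintype ι] [DecidableEq ι]

theorem specRad_nonneg (M : Matrix ι ι ℝ) : 0 ≤ specRad M :=
  Real.sSup_nonneg fun _ ⟨_, _, hz⟩ => hz ▸ norm_nonneg _

theorem norm_le_specRad_of_isRoot (M : Matrix ι ι ℝ) {z : ℂ}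
    (hz : (M.map ((↑) : ℝ → ℂ)).charpoly.IsRoot z) : ‖z‖ ≤ specRad M := by
  have hfin : {x : ℝ | ∃ w : ℂ, (M.map ((↑) : ℝ → ℂ)).charpoly.IsRoot w ∧ ‖w‖ = x}.Finite := by
    refine ((M.map ((↑) : ℝ → ℂ)).charpoly.roots.toFinset.finite_toSet.image norm).subset ?_
    rintro _ ⟨w, hw, rfl⟩
    exact ⟨w, by simpa [(M.map _).charpoly_monic.ne_zero] using hw, rfl⟩
  exact le_csSup hfin.bddAbove ⟨z, hz, rfl⟩

theorem spectralRadius_map_ofReal_le_specRad (M : Matrix ι ι ℝ) :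
    spectralRadius ℂ (M.map ((↑) : ℝ → ℂ)) ≤ ENNReal.ofReal (specRad M) := by
  refine iSup₂_le fun z hz => ?_
  rw [← enorm_eq_nnnorm, ← ofReal_norm]
  exact ENNReal.ofReal_le_ofReal
    (norm_le_specRad_of_isRoot M (Matrix.mem_spectrum_iff_isRoot_charpoly.mp hz))

theorem Matrix.pow_apply_nonneg_and_le {B C : Matrix ι ι ℝ} (hB : ∀ i j, 0 ≤ B i j)
    (hBC : ∀ i j, B i j ≤ C i j) (k : ℕ) (i j : ι) :
    0 ≤ (B ^ k) i j ∧ (B ^ k) i j ≤ (C ^ k) i j := by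
  induction k generalizing j with
  | zero => by_cases h : i = j <;> simp [h]
  | succ k ih =>
    simp only [pow_succ, Matrix.mul_apply]
    exact ⟨Finset.sum_nonneg fun l _ => mul_nonneg (ih l).1 (hB l j),
      Finset.sum_le_sum fun l _ => mul_le_mul (ih l).2 (hBC l j) (hB l j) ((ih l).1.trans (ih l).2)⟩

theorem Matrix.nnnorm_map_ofReal_pow_le {B C : Matrix ι ι ℝ} (hB : ∀ i j, 0 ≤ B i j)
    (hBC : ∀ i j, B i j ≤ C i j) (k : ℕ) :
    ‖(B.map ((↑) : ℝ → ℂ)) ^ k‖₊ ≤ ‖(C.map ((↑) : ℝ → ℂ)) ^ k‖₊ := by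
  have hmap : ∀ N : Matrix ι ι ℝ, (N.map ((↑) : ℝ → ℂ)) ^ k = (N ^ k).map (↑) := fun N =>
    (map_pow Complex.ofRealHom.mapMatrix N k).symm
  simp only [hmap, Matrix.linfty_opNNNorm_def, Matrix.map_apply]
  refine Finset.sup_mono_fun fun i _ => Finset.sum_le_sum fun j _ => ?_
  obtain ⟨h0, hle⟩ := Matrix.pow_apply_nonneg_and_le hB hBC k i j
  rw [← NNReal.coe_le_coe, coe_nnnorm, coe_nnnorm, Complex.norm_real, Complex.norm_real,
    Real.norm_of_nonneg h0, Real.norm_of_nonneg (h0.trans hle)]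
  exact hle

theorem norm_le_specRad_of_isRoot_of_le {B C : Matrix ι ι ℝ} (hB : ∀ i j, 0 ≤ B i j)
    (hBC : ∀ i j, B i j ≤ C i j) {z : ℂ} (hz : (B.map ((↑) : ℝ → ℂ)).charpoly.IsRoot z) :
    ‖z‖ ≤ specRad C := by
  have hspec : (‖z‖₊ : ℝ≥0∞) ≤ spectralRadius ℂ (B.map ((↑) : ℝ → ℂ)) :=
    le_iSup₂ (f := fun w (_ : w ∈ spectrum ℂ _) => (‖w‖₊ : ℝ≥0∞)) z
      (Matrix.mem_spectrum_iff_isRoot_charpoly.mpr hz)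
  have := hspec.trans ((spectralRadius_le_of_forall_nnnorm_pow_le
    (Matrix.nnnorm_map_ofReal_pow_le hB hBC)).trans (spectralRadius_map_ofReal_le_specRad C))
  rwa [← enorm_eq_nnnorm, ← ofReal_norm, ENNReal.ofReal_le_ofReal_iff (specRad_nonneg C)] at this

theorem apply_self_le_specRad {C : Matrix ι ι ℝ} (hC : ∀ i j, 0 ≤ C i j) (i : ι) :
    C i i ≤ specRad C := by
  have hroot :
      ((Matrix.diagonal fun j => C j j).map ((↑) : ℝ → ℂ)).charpoly.IsRoot (C i i : ℂ) := by
    rw [Matrix.diagonal_map Complex.ofReal_zero, Matrix.charpoly_diagonal, Polynomial.IsRoot,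
      Polynomial.eval_prod, Finset.prod_eq_zero_iff]
    exact ⟨i, Finset.mem_univ i, by simp⟩
  have hdiag (j k : ι) :
      0 ≤ (Matrix.diagonal fun j => C j j) j k ∧ (Matrix.diagonal fun j => C j j) j k ≤ C j k := by
    by_cases h : j = k
    · subst h; simpa using hC j j
    · simpa [Matrix.diagonal_apply_ne _ h] using hC j k
  simpa [Complex.norm_real, Real.norm_of_nonneg (hC i i)] using
    norm_le_specRad_of_isRoot_of_le (fun j k => (hdiag j k).1) (fun j k => (hdiag j k).2) hroot

end SpectralRadius

namespace SimpleGraph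

variable {β : Type*} {G : SimpleGraph β} {D : β → β → Prop}

theorem IsAcyclic.exists_isPath_of_transGen (hG : G.IsAcyclic) (hDG : ∀ u v, D u v → G.Adj u v)
    (hD : ∀ u v, D u v → ¬D v u) {u v : β} (h : TransGen D u v) :
    ∃ p : G.Walk u v, p.IsPath ∧ D u p.snd := by
  induction h using TransGen.head_induction_on with
  | single huv => exact ⟨.cons (hDG _ _ huv) .nil, by simpa using (hDG _ _ huv).ne, by simpa⟩
  | @head u m hum _ ih =>
    obtain ⟨p, hp, hmp⟩ := ih
    by_cases hu : u ∈ p.support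
    · exact absurd (hG.eq_snd_of_adj_start hp (hDG _ _ hum).symm hu ▸ hmp) (hD _ _ hum)
    · exact ⟨.cons (hDG _ _ hum) p, hp.cons hu, by simpa⟩

theorem IsAcyclic.not_transGen_self (hG : G.IsAcyclic) (hDG : ∀ u v, D u v → G.Adj u v)
    (hD : ∀ u v, D u v → ¬D v u) (v : β) : ¬TransGen D v v := fun h => by
  obtain ⟨p, hp, hvp⟩ := hG.exists_isPath_of_transGen hDG hD h
  rw [Walk.eq_nil_iff_nil.mpr (Walk.isPath_iff_nil.mp hp)] at hvp
  exact (hDG _ _ hvp).ne rfl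

end SimpleGraph

theorem Relation.TransGen.subtype {α : Type*} {r : α → α → Prop} {P : α → Prop}
    (hP : ∀ a b, r a b → P a → P b) {a b : α} (h : TransGen r a b) (ha : P a) (hb : P b) :
    TransGen (fun x y : Subtype P => r x y) ⟨a, ha⟩ ⟨b, hb⟩ := by
  induction h using TransGen.head_induction_on with
  | single hab => exact .single hab
  | head hac _ ih => exact .head hac (ih (hP _ _ hac ha))

section AcyclicRelation

variable {α : Type*} [Finite α] {r : α → α → Prop}

theorem ncard_transGen_lt_of_rel (hr : ∀ a, ¬TransGen r a a) {a b : α} (h : r a b) :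
    {x | TransGen r x a}.ncard < {x | TransGen r x b}.ncard :=
  Set.ncard_lt_ncard ⟨fun _ hx => hx.tail h, fun hsub => hr a (hsub (.single h))⟩ (Set.toFinite _)

theorem ncard_transGen_lt_card (hr : ∀ a, ¬TransGen r a a) (a : α) :
    {x | TransGen r x a}.ncard < Nat.card α := by
  rw [← Set.ncard_univ]
  exact Set.ncard_lt_ncard ⟨Set.subset_univ _, fun hsub => hr a (hsub trivial)⟩ (Set.toFinite _)

end AcyclicRelation

namespace Matrix

variable {R V : Type*}

section Zero

variable [Zero R]

def IsArcOutside (M : Matrix V V R) (T : Finset V) (u v : V) : Prop :=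
  u ≠ v ∧ M u v ≠ 0 ∧ ¬(u ∈ T ∧ v ∈ T)

open Classical in
/-- Vertices that reach `T` come first and all other vertices after `T`, each group ordered by
the number of strict ancestors; when `T` is the only place where cycles can occur, this makes
`M` block triangular with `T` as a single block and `1 × 1` blocks elsewhere. -/
noncomputable def collapseLevel (M : Matrix V V R) (T : Finset V) (v : V) : ℕ :=
  if v ∈ T then Nat.card V
  else if ∃ t ∈ T, TransGen (M.IsArcOutside T) v t then
    {w | TransGen (M.IsArcOutside T) w v}.ncard
  else Nat.card V + 1 + {w | TransGen (M.IsArcOutside T) w v}.ncard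

variable [Finite V] {M : Matrix V V R} {T : Finset V}
  (hacyc : ∀ v, ¬TransGen (M.IsArcOutside T) v v)
include hacyc

theorem collapseLevel_lt_of_isArcOutside
    (hT : ∀ t ∈ T, ∀ t' ∈ T, ¬TransGen (M.IsArcOutside T) t t')
    {u v : V} (h : M.IsArcOutside T u v) : M.collapseLevel T u < M.collapseLevel T v := by
  have hu_lt := ncard_transGen_lt_card hacyc u
  have huv := ncard_transGen_lt_of_rel hacyc h
  by_cases hu : u ∈ T
  · have hv : v ∉ T := fun hv => h.2.2 ⟨hu, hv⟩
    have hreach : ¬∃ t ∈ T, TransGen (M.IsArcOutside T) v t :=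
      fun ⟨t, ht, hvt⟩ => hT u hu t ht (.head h hvt)
    simp only [collapseLevel, hu, hv, hreach, if_true, if_false]
    omega
  by_cases hv : v ∈ T
  · have hreach : ∃ t ∈ T, TransGen (M.IsArcOutside T) u t := ⟨v, hv, .single h⟩
    simp only [collapseLevel, hu, hv, hreach, if_true, if_false]
    omega
  by_cases hvr : ∃ t ∈ T, TransGen (M.IsArcOutside T) v t
  · have hur : ∃ t ∈ T, TransGen (M.IsArcOutside T) u t :=
      hvr.imp fun t ⟨ht, hvt⟩ => ⟨ht, .head h hvt⟩
    simp only [collapseLevel, hu, hv, hur, hvr, if_true, if_false]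
    omega
  · simp only [collapseLevel, hu, hv, hvr, if_false]
    split_ifs <;> omega

theorem collapseLevel_eq_card_iff (v : V) : M.collapseLevel T v = Nat.card V ↔ v ∈ T := by
  have := ncard_transGen_lt_card hacyc v
  unfold collapseLevel
  split_ifs <;> simp_all <;> omega

theorem blockTriangular_collapseLevel
    (hT : ∀ t ∈ T, ∀ t' ∈ T, ¬TransGen (M.IsArcOutside T) t t') :
    M.BlockTriangular (M.collapseLevel T) := by
  intro i j hji
  by_contra hij
  by_cases hT' : i ∈ T ∧ j ∈ T
  · rw [(collapseLevel_eq_card_iff hacyc i).mpr hT'.1,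
      (collapseLevel_eq_card_iff hacyc j).mpr hT'.2] at hji
    exact lt_irrefl _ hji
  · have hne : i ≠ j := by rintro rfl; exact lt_irrefl _ hji
    exact (collapseLevel_lt_of_isArcOutside hacyc hT ⟨hne, hij, hT'⟩).not_gt hji

theorem toSquareBlock_collapseLevel_of_ne_card [DecidableEq V]
    (hT : ∀ t ∈ T, ∀ t' ∈ T, ¬TransGen (M.IsArcOutside T) t t') {k : ℕ} (hk : k ≠ Nat.card V) :
    M.toSquareBlock (M.collapseLevel T) k =
      diagonal fun v : {v // M.collapseLevel T v = k} => M v v := by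
  ext i j
  by_cases hij : i = j
  · subst hij
    rw [diagonal_apply_eq, toSquareBlock_def, of_apply]
  rw [diagonal_apply_ne _ hij, toSquareBlock_def, of_apply]
  by_contra hM
  have hT' : ¬(i.1 ∈ T ∧ j.1 ∈ T) := fun h =>
    hk (i.2 ▸ (collapseLevel_eq_card_iff hacyc i).mpr h.1)
  have := collapseLevel_lt_of_isArcOutside hacyc hT ⟨Subtype.coe_ne_coe.mpr hij, hM, hT'⟩
  rw [i.2, j.2] at this
  exact lt_irrefl _ this

end Zero

theorem isRoot_charpoly_submatrix_or_eq_diag [CommRing R] [IsDomain R] [Fintype V]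
    [DecidableEq V] {M : Matrix V V R} {T : Finset V}
    (hacyc : ∀ v, ¬TransGen (M.IsArcOutside T) v v)
    (hT : ∀ t ∈ T, ∀ t' ∈ T, ¬TransGen (M.IsArcOutside T) t t') {z : R}
    (hz : M.charpoly.IsRoot z) :
    (M.submatrix ((↑) : T → V) (↑)).charpoly.IsRoot z ∨ ∃ v ∉ T, z = M v v := by
  rw [Polynomial.IsRoot, (blockTriangular_collapseLevel hacyc hT).charpoly,
    Polynomial.eval_prod] at hz
  obtain ⟨k, -, hk⟩ := Finset.prod_eq_zero_iff.mp hz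
  by_cases hkT : k = Nat.card V
  · subst hkT
    let e : {v // M.collapseLevel T v = Nat.card V} ≃ T :=
      Equiv.subtypeEquivRight (collapseLevel_eq_card_iff hacyc)
    exact .inl (by rwa [← Matrix.charpoly_reindex e] at hk)
  · rw [toSquareBlock_collapseLevel_of_ne_card hacyc hT hkT, charpoly_diagonal,
      Polynomial.eval_prod] at hk
    obtain ⟨v, -, hv⟩ := Finset.prod_eq_zero_iff.mp hk
    refine .inr ⟨v, fun hvT => hkT ?_, by simpa [sub_eq_zero] using hv⟩
    rw [← v.2, (collapseLevel_eq_card_iff hacyc v).mpr hvT]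

end Matrix

theorem Aalpha_apply_of_ne {V : Type*} [Fintype V] [DecidableEq V] (α : ℝ) (A : Matrix V V ℝ)
    {u v : V} (h : u ≠ v) : Aalpha α A u v = (1 - α) * A u v := by
  simp [Aalpha, Matrix.diagonal_apply_ne _ h]

theorem Aalpha_apply_self {V : Type*} [Fintype V] [DecidableEq V] (α : ℝ) (A : Matrix V V ℝ)
    (v : V) : Aalpha α A v v = α * outdeg A v + (1 - α) * A v v := by
  simp [Aalpha]

noncomputable def outStarBlock {V : Type*} [Fintype V] [DecidableEq V] (α : ℝ)
    (A : Matrix V V ℝ) (S : Finset V) (r : V → V) : Matrix S S ℝ :=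
  α • Matrix.diagonal (fun s : {v : V // v ∈ S} => dStar A S s.1 + (fibCard r s.1 : ℝ) - 1)
    + (1 - α) • subm A S

theorem outStarBlock_apply_of_ne {V : Type*} [Fintype V] [DecidableEq V] (α : ℝ)
    (A : Matrix V V ℝ) (S : Finset V) (r : V → V) {i j : S} (h : i ≠ j) :
    outStarBlock α A S r i j = (1 - α) * A i j := by
  simp [outStarBlock, Matrix.diagonal_apply_ne _ h, subm]

theorem card_fiber_erase {V : Type*} [Fintype V] [DecidableEq V] (r : V → V) (v : V) :
    (#((univ.filter fun w => r w = r v).erase v) : ℝ) = fibCard r (r v) - 1 := by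
  rw [Finset.card_erase_of_mem (by simp), Nat.cast_sub (Finset.card_pos.mpr ⟨v, by simp⟩),
    fibCard, Nat.cast_one]

def IsTreeArc {V : Type*} (A : Matrix V V ℝ) (S : Finset V) (u v : V) : Prop :=
  A u v = 1 ∧ ¬(u ∈ S ∧ v ∈ S)

namespace IsGnm

variable {V : Type*} [Fintype V] [DecidableEq V] {A : Matrix V V ℝ} {S : Finset V} {r : V → V}
  {n m : ℕ}

theorem apply_nonneg (hG : IsGnm A S r n m) (u v : V) : 0 ≤ A u v := by
  rcases hG.zero_one u v with h | h <;> simp [h]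

theorem apply_le_one (hG : IsGnm A S r n m) (u v : V) : A u v ≤ 1 := by
  rcases hG.zero_one u v with h | h <;> simp [h]

theorem dStar_nonneg (hG : IsGnm A S r n m) (s : V) : 0 ≤ dStar A S s :=
  Finset.sum_nonneg fun w _ => hG.apply_nonneg s w

theorem one_le_fibCard (hG : IsGnm A S r n m) {s : V} (hs : s ∈ S) : (1 : ℝ) ≤ fibCard r s :=
  Nat.one_le_cast.mpr (Finset.card_pos.mpr ⟨s, by simp [hG.r_fix s hs]⟩)

theorem Aalpha_apply_self (hG : IsGnm A S r n m) (α : ℝ) (v : V) :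
    Aalpha α A v v = α * outdeg A v := by
  rw [_root_.Aalpha_apply_self, hG.loopless, mul_zero, add_zero]

theorem Aalpha_apply_nonneg (hG : IsGnm A S r n m) {α : ℝ} (hα0 : 0 ≤ α) (hα1 : α ≤ 1)
    (u v : V) : 0 ≤ Aalpha α A u v := by
  by_cases huv : u = v
  · subst huv
    rw [hG.Aalpha_apply_self]
    exact mul_nonneg hα0 (Finset.sum_nonneg fun w _ => hG.apply_nonneg u w)
  · rw [Aalpha_apply_of_ne α A huv]
    exact mul_nonneg (by linarith) (hG.apply_nonneg u v)

theorem outStarBlock_apply_self (hG : IsGnm A S r n m) (α : ℝ) (s : S) :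
    outStarBlock α A S r s s = α * (dStar A S s + fibCard r s - 1) := by
  simp [outStarBlock, subm, hG.loopless]

theorem outStarBlock_nonneg (hG : IsGnm A S r n m) {α : ℝ} (hα0 : 0 ≤ α) (hα1 : α ≤ 1)
    (i j : S) : 0 ≤ outStarBlock α A S r i j := by
  by_cases hij : i = j
  · subst hij
    rw [hG.outStarBlock_apply_self]
    exact mul_nonneg hα0 (by linarith [hG.one_le_fibCard i.2, hG.dStar_nonneg i])
  · rw [outStarBlock_apply_of_ne α A S r hij]
    exact mul_nonneg (by linarith) (hG.apply_nonneg _ _)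

theorem r_eq_of_isTreeArc (hG : IsGnm A S r n m) {u v : V} (h : IsTreeArc A S u v) : r u = r v :=
  (hG.arc_cases u v h.1).resolve_left h.2

theorem r_eq_of_transGen (hG : IsGnm A S r n m) {u v : V}
    (h : TransGen (IsTreeArc A S) u v) : r u = r v := by
  induction h with
  | single h => exact hG.r_eq_of_isTreeArc h
  | tail _ h ih => exact ih.trans (hG.r_eq_of_isTreeArc h)

theorem not_transGen_self (hG : IsGnm A S r n m) (v : V) : ¬TransGen (IsTreeArc A S) v v := by
  intro h
  have hfib := h.subtype (P := fun x => r x = r v)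
    (fun a b hab ha => (hG.r_eq_of_isTreeArc hab).symm.trans ha) rfl rfl
  refine (hG.fiber_tree (r v) (hG.r_mem v)).isAcyclic.not_transGen_self ?_ ?_ _ hfib
  · intro x y hxy
    refine ⟨fun hxy' => ?_, .inl hxy.1⟩
    have := hxy.1
    rw [hxy', hG.loopless] at this
    exact zero_ne_one this
  · intro x y hxy hyx
    have := hG.fiber_no_symm x y (x.2.trans y.2.symm) hxy.1
    rw [hyx.1] at this
    exact one_ne_zero this

theorem not_transGen_of_mem (hG : IsGnm A S r n m) {s t : V} (hs : s ∈ S) (ht : t ∈ S) :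
    ¬TransGen (IsTreeArc A S) s t := fun h => by
  have hst : s = t := by rw [← hG.r_fix s hs, ← hG.r_fix t ht, hG.r_eq_of_transGen h]
  exact hG.not_transGen_self s (hst ▸ h)

theorem transGen_isTreeArc_of_isArcOutside (hG : IsGnm A S r n m) (α : ℝ) {u v : V}
    (h : TransGen (((Aalpha α A).map ((↑) : ℝ → ℂ)).IsArcOutside S) u v) :
    TransGen (IsTreeArc A S) u v := by
  refine TransGen.mono (fun a b hab => ⟨?_, hab.2.2⟩) u v h
  have hne := hab.2.1
  rw [Matrix.map_apply, Aalpha_apply_of_ne α A hab.1] at hne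
  exact (hG.zero_one a b).resolve_left fun h0 => hne (by simp [h0])

theorem isRoot_charpoly_Aalpha (hG : IsGnm A S r n m) (α : ℝ) {z : ℂ}
    (hz : ((Aalpha α A).map ((↑) : ℝ → ℂ)).charpoly.IsRoot z) :
    (((Aalpha α A).submatrix ((↑) : S → V) (↑)).map ((↑) : ℝ → ℂ)).charpoly.IsRoot z ∨
      ∃ v ∉ S, z = Aalpha α A v v :=
  Matrix.isRoot_charpoly_submatrix_or_eq_diag
    (fun v h => hG.not_transGen_self v (hG.transGen_isTreeArc_of_isArcOutside α h))
    (fun _ hs _ ht h => hG.not_transGen_of_mem hs ht (hG.transGen_isTreeArc_of_isArcOutside α h))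
    hz

theorem sum_apply_le_card (hG : IsGnm A S r n m) {v : V} {X Y : Finset V}
    (hXY : ∀ w ∈ X, A v w = 1 → w ∈ Y) : ∑ w ∈ X, A v w ≤ #Y := by
  rw [← Finset.sum_filter_of_ne (p := (· ∈ Y)) fun w hw hne =>
    hXY w hw ((hG.zero_one v w).resolve_left hne)]
  calc ∑ w ∈ X with w ∈ Y, A v w ≤ ∑ w ∈ X with w ∈ Y, (1 : ℝ) :=
        Finset.sum_le_sum fun w _ => hG.apply_le_one v w
    _ ≤ #Y := by
        rw [Finset.sum_const, nsmul_one, Nat.cast_le]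
        exact Finset.card_le_card fun w hw => (Finset.mem_filter.mp hw).2

theorem outdeg_le_of_notMem (hG : IsGnm A S r n m) {v : V} (hv : v ∉ S) :
    outdeg A v ≤ fibCard r (r v) - 1 := by
  rw [← card_fiber_erase]
  refine hG.sum_apply_le_card fun w _ hvw => Finset.mem_erase.mpr ⟨?_, ?_⟩
  · rintro rfl
    rw [hG.loopless] at hvw
    exact zero_ne_one hvw
  · simpa using (hG.r_eq_of_isTreeArc ⟨hvw, fun h => hv h.1⟩).symm

theorem outdeg_le_of_mem (hG : IsGnm A S r n m) {s : V} (hs : s ∈ S) :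
    outdeg A s ≤ dStar A S s + fibCard r s - 1 := by
  have hout : ∑ w ∈ Sᶜ, A s w ≤ fibCard r s - 1 := by
    have hcard := card_fiber_erase r s
    rw [hG.r_fix s hs] at hcard
    rw [← hcard]
    refine hG.sum_apply_le_card fun w hw hsw => Finset.mem_erase.mpr ⟨?_, ?_⟩
    · rintro rfl
      exact Finset.mem_compl.mp hw hs
    · simpa [hG.r_fix s hs] using
        (hG.r_eq_of_isTreeArc ⟨hsw, fun h => Finset.mem_compl.mp hw h.2⟩).symm
  rw [outdeg, ← Finset.sum_add_sum_compl S, dStar]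
  linarith

theorem Aalpha_submatrix_le_outStarBlock (hG : IsGnm A S r n m) {α : ℝ} (hα0 : 0 ≤ α)
    (i j : S) : (Aalpha α A).submatrix (↑) (↑) i j ≤ outStarBlock α A S r i j := by
  by_cases hij : i = j
  · subst hij
    rw [Matrix.submatrix_apply, hG.Aalpha_apply_self, hG.outStarBlock_apply_self]
    exact mul_le_mul_of_nonneg_left (hG.outdeg_le_of_mem i.2) hα0
  · rw [Matrix.submatrix_apply, Aalpha_apply_of_ne α A (Subtype.coe_ne_coe.mpr hij),
      outStarBlock_apply_of_ne α A S r hij]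

theorem Aalpha_apply_self_le_specRad_outStarBlock (hG : IsGnm A S r n m) {α : ℝ} (hα0 : 0 ≤ α)
    (hα1 : α ≤ 1) {v : V} (hv : v ∉ S) : Aalpha α A v v ≤ specRad (outStarBlock α A S r) := by
  let s : S := ⟨r v, hG.r_mem v⟩
  calc Aalpha α A v v = α * outdeg A v := hG.Aalpha_apply_self α v
    _ ≤ α * (dStar A S s + fibCard r s - 1) :=
        mul_le_mul_of_nonneg_left
          (by linarith [hG.outdeg_le_of_notMem hv, hG.dStar_nonneg s]) hα0
    _ = outStarBlock α A S r s s := (hG.outStarBlock_apply_self α s).symm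
    _ ≤ specRad (outStarBlock α A S r) :=
        apply_self_le_specRad (hG.outStarBlock_nonneg hα0 hα1) s

end IsGnm

/-- For `G ∈ 𝒢_n^m`, the `A_α` spectral radius of `G` is at most the spectral radius of
`M' = α·diag(d*(s) + n_s - 1) + (1-α)·A*`, the block on `S` of the `A_α`-matrix of the
digraph `G'` obtained by replacing each hung tree by an out-star of the same size. -/
theorem stmt2 {V : Type*} [Fintype V] [DecidableEq V] (A : Matrix V V ℝ) (S : Finset V)
    (r : V → V) (n m : ℕ) (hG : IsGnm A S r n m) (α : ℝ) (hα0 : 0 ≤ α) (hα1 : α < 1) :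
    specRad (Aalpha α A) ≤
      specRad (α • Matrix.diagonal
          (fun s : {v : V // v ∈ S} => dStar A S s.1 + (fibCard r s.1 : ℝ) - 1)
        + (1 - α) • subm A S) := by
  change specRad (Aalpha α A) ≤ specRad (outStarBlock α A S r)
  refine Real.sSup_le (fun _ ⟨z, hz, hx⟩ => hx ▸ ?_) (specRad_nonneg _)
  rcases hG.isRoot_charpoly_Aalpha α hz with hS | ⟨v, hv, rfl⟩
  · exact norm_le_specRad_of_isRoot_of_le (fun i j => hG.Aalpha_apply_nonneg hα0 hα1.le _ _)
      (hG.Aalpha_submatrix_le_outStarBlock hα0) hS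
  · rw [Complex.norm_real, Real.norm_of_nonneg (hG.Aalpha_apply_nonneg hα0 hα1.le v v)]
    exact hG.Aalpha_apply_self_le_specRad_outStarBlock hα0 hα1.le hv
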